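/- arXiv:1401.0677 — 3 statements merged into one kernel-verified Lean document; each statement's English description precedes it below -/
import Mathlib

section
/- Cauchy–Schwarz inequality for sublinear expectations (used in the proof of Proposition 3.1(1)): Let E be a sublinear expectation on a type Ω. Then for all functions X, Y : Ω → ℝ, E(fun ω => |X ω * Y ω|) ≤ Real.sqrt (E(fun ω => (X ω)^2)) * Real.sqrt (E(fun ω => (Y ω)^2)). -/
/-- A sublinear expectation on a type `Ω`. -/
structure SublinearExpectation (Ω : Type*) where
  E : (Ω → ℝ) → ℝ
  mono : ∀ X Y : Ω → ℝ, (∀ ω, X ω ≤ Y ω) → E X ≤ E Y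
  const_preserving : ∀ c : ℝ, E (fun _ => c) = c
  subadd : ∀ X Y : Ω → ℝ, E (X + Y) ≤ E X + E Y
  pos_hom : ∀ (l : ℝ) (X : Ω → ℝ), 0 ≤ l → E (fun ω => l * X ω) = l * E X

/-- Cauchy–Schwarz inequality for sublinear expectations. -/
theorem cauchy_schwarz_sublinear {Ω : Type*} (𝔼 : SublinearExpectation Ω)
    (X Y : Ω → ℝ) :
    𝔼.E (fun ω => |X ω * Y ω|) ≤
      Real.sqrt (𝔼.E (fun ω => (X ω) ^ 2)) * Real.sqrt (𝔼.E (fun ω => (Y ω) ^ 2)) := by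
  set a := 𝔼.E (fun ω => (X ω) ^ 2) with ha
  set b := 𝔼.E (fun ω => (Y ω) ^ 2) with hb
  have hE0 : 𝔼.E (fun _ => (0:ℝ)) = 0 := 𝔼.const_preserving 0
  have hnonneg : ∀ Z : Ω → ℝ, (∀ ω, 0 ≤ Z ω) → 0 ≤ 𝔼.E Z := by
    intro Z hZ
    have := 𝔼.mono (fun _ => 0) Z hZ
    linarith [hE0]
  have ha0 : 0 ≤ a := hnonneg _ (fun ω => sq_nonneg _)
  have hb0 : 0 ≤ b := hnonneg _ (fun ω => sq_nonneg _)
  -- key bound: for all ε > 0, E|XY| ≤ (ε a + b/ε)/2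
  have key : ∀ ε : ℝ, 0 < ε →
      𝔼.E (fun ω => |X ω * Y ω|) ≤ (ε/2) * a + (1/(2*ε)) * b := by
    intro ε hε
    have hpt : ∀ ω, |X ω * Y ω| ≤
        (fun ω => (ε/2) * (X ω)^2) ω + (fun ω => (1/(2*ε)) * (Y ω)^2) ω := by
      intro ω
      simp only
      have h := sq_nonneg (Real.sqrt ε * X ω - Y ω / Real.sqrt ε)
      have h2 := sq_nonneg (Real.sqrt ε * X ω + Y ω / Real.sqrt ε)
      have hs : Real.sqrt ε ^ 2 = ε := Real.sq_sqrt hε.le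
      have hsne : Real.sqrt ε ≠ 0 := by positivity
      have hxy : |X ω * Y ω| ≤ (ε * (X ω)^2 + (Y ω)^2 / ε) / 2 := by
        have h2e : 2 * ε * |X ω * Y ω| ≤ ε^2 * (X ω)^2 + (Y ω)^2 := by
          rcases abs_cases (X ω * Y ω) with ⟨he, _⟩ | ⟨he, _⟩ <;> rw [he] <;>
            nlinarith [sq_nonneg (ε * X ω - Y ω), sq_nonneg (ε * X ω + Y ω)]
        have heq2 : (ε * (X ω)^2 + (Y ω)^2 / ε) / 2 = (ε^2 * (X ω)^2 + (Y ω)^2) / (2*ε) := by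
          field_simp
        rw [heq2, le_div_iff₀ (by positivity)]
        linarith
      have : (ε * (X ω)^2 + (Y ω)^2 / ε) / 2 =
          (ε/2) * (X ω)^2 + (1/(2*ε)) * (Y ω)^2 := by field_simp
      linarith [hxy, this.le]
    calc 𝔼.E (fun ω => |X ω * Y ω|)
        ≤ 𝔼.E ((fun ω => (ε/2) * (X ω)^2) + (fun ω => (1/(2*ε)) * (Y ω)^2)) :=
          𝔼.mono _ _ hpt
      _ ≤ 𝔼.E (fun ω => (ε/2) * (X ω)^2) + 𝔼.E (fun ω => (1/(2*ε)) * (Y ω)^2) :=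
          𝔼.subadd _ _
      _ = (ε/2) * a + (1/(2*ε)) * b := by
          rw [𝔼.pos_hom (ε/2) _ (by positivity), 𝔼.pos_hom (1/(2*ε)) _ (by positivity)]
  rcases eq_or_lt_of_le ha0 with ha0' | hapos
  · -- a = 0 : show E|XY| ≤ 0
    have hle : 𝔼.E (fun ω => |X ω * Y ω|) ≤ 0 := by
      apply le_of_forall_pos_le_add
      intro δ hδ
      have hε : (0:ℝ) < b/(2*δ) + 1 := by positivity
      have := key _ hε
      have hb' : (1/(2*(b/(2*δ)+1))) * b ≤ δ := by
        have h1 : 2*δ*(b/(2*δ)) = b := by field_simp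
        rw [div_mul_eq_mul_div, one_mul, div_le_iff₀ (by positivity)]
        nlinarith [h1]
      rw [← ha0'] at this
      linarith
    have : 0 ≤ Real.sqrt a * Real.sqrt b := by positivity
    linarith
  rcases eq_or_lt_of_le hb0 with hb0' | hbpos
  · have hle : 𝔼.E (fun ω => |X ω * Y ω|) ≤ 0 := by
      apply le_of_forall_pos_le_add
      intro δ hδ
      have hε : (0:ℝ) < 2*δ/a := by positivity
      have := key _ hε
      rw [← hb0'] at this
      simp only [mul_zero, add_zero] at this
      have h1 : (2*δ/a)/2 * a = δ := by field_simp
      linarith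
    have : 0 ≤ Real.sqrt a * Real.sqrt b := by positivity
    linarith
  · -- a, b > 0 : ε = sqrt b / sqrt a
    have hsa : (0:ℝ) < Real.sqrt a := Real.sqrt_pos.mpr hapos
    have hsb : (0:ℝ) < Real.sqrt b := Real.sqrt_pos.mpr hbpos
    have hε : (0:ℝ) < Real.sqrt b / Real.sqrt a := by positivity
    have := key _ hε
    have hsa2 : Real.sqrt a ^ 2 = a := Real.sq_sqrt hapos.le
    have hsb2 : Real.sqrt b ^ 2 = b := Real.sq_sqrt hbpos.le
    have heq : (Real.sqrt b / Real.sqrt a / 2) * a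
        + (1/(2*(Real.sqrt b / Real.sqrt a))) * b = Real.sqrt a * Real.sqrt b := by
      field_simp
      nlinarith [hsa2, hsb2]
    linarith
end

section
/- Hölder inequality for sublinear expectations (underlying the norms ‖X‖_p = (Ê[|X|^p])^{1/p} used to construct the spaces L^p_G): Let E be a sublinear expectation on a type Ω and let p, q ∈ (1, ∞) with 1/p + 1/q = 1. Then for all X, Y : Ω → ℝ, E(fun ω => |X ω * Y ω|) ≤ (E(fun ω => |X ω|^p))^(1/p) * (E(fun ω => |Y ω|^q))^(1/q). -/
/-!
Young's inequality scaled by `α, β > 0` gives, pointwise,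
`|X Y| ≤ αβ/(p αᵖ) |X|ᵖ + αβ/(q β^q) |Y|^q`; monotonicity, subadditivity and positive homogeneity
turn this into `𝔼|XY| ≤ αβ` as soon as `𝔼|X|ᵖ ≤ αᵖ` and `𝔼|Y|^q ≤ β^q`. Letting `α` and `β`
decrease to `(𝔼|X|ᵖ)^(1/p)` and `(𝔼|Y|^q)^(1/q)` gives the inequality, including the degenerate
cases where one of these vanishes.
-/

theorem Real.young_inequality_of_nonneg_of_pos {x y p q α β : ℝ} (hx : 0 ≤ x) (hy : 0 ≤ y)
    (hα : 0 < α) (hβ : 0 < β) (hpq : p.HolderConjugate q) :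
    x * y ≤ α * β / (p * α ^ p) * x ^ p + α * β / (q * β ^ q) * y ^ q := by
  have hp := hpq.pos
  have hq := hpq.symm.pos
  have young := Real.young_inequality_of_nonneg (div_nonneg hx hα.le) (div_nonneg hy hβ.le) hpq
  rw [Real.div_rpow hx hα.le, Real.div_rpow hy hβ.le] at young
  calc x * y = α * β * (x / α * (y / β)) := by field_simp
    _ ≤ α * β * (x ^ p / α ^ p / p + y ^ q / β ^ q / q) := by gcongr
    _ = α * β / (p * α ^ p) * x ^ p + α * β / (q * β ^ q) * y ^ q := by ring

namespace SublinearExpectation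

variable {Ω : Type*} (𝔼 : SublinearExpectation Ω)

theorem E_nonneg {Z : Ω → ℝ} (hZ : ∀ ω, 0 ≤ Z ω) : 0 ≤ 𝔼.E Z :=
  calc 0 = 𝔼.E (fun _ => 0) := (𝔼.const_preserving 0).symm
    _ ≤ 𝔼.E Z := 𝔼.mono _ _ hZ

theorem E_le_of_le_add {Z U V : Ω → ℝ} {c d : ℝ} (hc : 0 ≤ c) (hd : 0 ≤ d)
    (h : ∀ ω, Z ω ≤ c * U ω + d * V ω) : 𝔼.E Z ≤ c * 𝔼.E U + d * 𝔼.E V :=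
  calc 𝔼.E Z ≤ 𝔼.E ((fun ω => c * U ω) + fun ω => d * V ω) := 𝔼.mono _ _ h
    _ ≤ 𝔼.E (fun ω => c * U ω) + 𝔼.E (fun ω => d * V ω) := 𝔼.subadd _ _
    _ = c * 𝔼.E U + d * 𝔼.E V := by rw [𝔼.pos_hom c U hc, 𝔼.pos_hom d V hd]

theorem E_abs_mul_le_of_le_rpow {p q α β : ℝ} (hpq : p.HolderConjugate q) (hα : 0 < α)
    (hβ : 0 < β) {X Y : Ω → ℝ} (hX : 𝔼.E (fun ω => |X ω| ^ p) ≤ α ^ p)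
    (hY : 𝔼.E (fun ω => |Y ω| ^ q) ≤ β ^ q) :
    𝔼.E (fun ω => |X ω * Y ω|) ≤ α * β := by
  have hp := hpq.pos
  have hq := hpq.symm.pos
  have hαp : 0 < α ^ p := Real.rpow_pos_of_pos hα p
  have hβq : 0 < β ^ q := Real.rpow_pos_of_pos hβ q
  calc 𝔼.E (fun ω => |X ω * Y ω|)
      ≤ α * β / (p * α ^ p) * 𝔼.E (fun ω => |X ω| ^ p)
          + α * β / (q * β ^ q) * 𝔼.E (fun ω => |Y ω| ^ q) :=
        𝔼.E_le_of_le_add (by positivity) (by positivity) fun ω => by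
          rw [abs_mul]
          exact Real.young_inequality_of_nonneg_of_pos (abs_nonneg _) (abs_nonneg _) hα hβ hpq
    _ ≤ α * β / (p * α ^ p) * α ^ p + α * β / (q * β ^ q) * β ^ q := by gcongr
    _ = α * β * (p⁻¹ + q⁻¹) := by field_simp
    _ = α * β := by rw [hpq.inv_add_inv_eq_one, mul_one]

end SublinearExpectation

theorem holder_sublinear_general {Ω : Type*} (𝔼 : SublinearExpectation Ω)
    (p q : ℝ) (hp : 1 < p) (hpq : 1 / p + 1 / q = 1)
    (X Y : Ω → ℝ) :
    𝔼.E (fun ω => |X ω * Y ω|) ≤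
      (𝔼.E (fun ω => |X ω| ^ p)) ^ (1 / p) * (𝔼.E (fun ω => |Y ω| ^ q)) ^ (1 / q) := by
  have hconj : p.HolderConjugate q :=
    Real.holderConjugate_iff.mpr ⟨hp, by simpa only [one_div] using hpq⟩
  have hX := 𝔼.E_nonneg fun ω => Real.rpow_nonneg (abs_nonneg (X ω)) p
  have hY := 𝔼.E_nonneg fun ω => Real.rpow_nonneg (abs_nonneg (Y ω)) q
  refine le_mul_of_forall_lt₀ fun α hα β hβ => ?_
  have hα0 : 0 < α := (Real.rpow_nonneg hX _).trans_lt hα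
  have hβ0 : 0 < β := (Real.rpow_nonneg hY _).trans_lt hβ
  rw [one_div] at hα hβ
  exact 𝔼.E_abs_mul_le_of_le_rpow hconj hα0 hβ0
    ((Real.rpow_inv_lt_iff_of_pos hX hα0.le hconj.pos).1 hα).le
    ((Real.rpow_inv_lt_iff_of_pos hY hβ0.le hconj.symm.pos).1 hβ).le

/-- Hölder inequality for sublinear expectations. -/
theorem holder_sublinear {Ω : Type*} (𝔼 : SublinearExpectation Ω)
    (p q : ℝ) (hp : 1 < p) (hq : 1 < q) (hpq : 1 / p + 1 / q = 1)
    (X Y : Ω → ℝ) :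
    𝔼.E (fun ω => |X ω * Y ω|) ≤
      (𝔼.E (fun ω => |X ω| ^ p)) ^ (1 / p) * (𝔼.E (fun ω => |Y ω| ^ q)) ^ (1 / q) :=
  holder_sublinear_general 𝔼 p q hp hpq X Y
end

section
/- Uniqueness in the Doob–Meyer decomposition with natural increasing parts (classical single-measure form of Theorem 3.2(2)): Let (Ω, ℱ, μ) be a probability space with a filtration (ℱ_s)_{s ∈ [0,∞)}. Let M′, M″ be martingales and A′, A″ adapted processes with each A′_t, A″_t integrable, A′_0 = A″_0 = 0 a.e., and M′_t − A′_t = M″_t − A″_t a.e. for every t. Set C := A′ − A″. Suppose that for each t > 0 there is a sequence of partitions Π_n = {0 = t₀⁽ⁿ⁾ ≤ ⋯ ≤ t_{m_n}⁽ⁿ⁾ = t} of [0, t] with mesh tending to 0 such that for every uniformly bounded martingale ξ, ∫ ξ_t · C_t dμ = lim_{n → ∞} ∫ (∑_{j=1}^{m_n} ξ_{t_{j−1}⁽ⁿ⁾} · (C_{t_j⁽ⁿ⁾} − C_{t_{j−1}⁽ⁿ⁾})) dμ. Then for every t, A′_t = A″_t μ-almost everywhere (and hence M′_t = M″_t μ-almost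 everywhere). -/
/-!
At each time `C = A' - A''` agrees a.e. with the martingale `N = M' - M''`. An increment of a
martingale is orthogonal to every bounded function measurable at its left endpoint, so every
Riemann sum `∑ ξ_{t_{j-1}} (C_{t_j} - C_{t_{j-1}})` has integral zero, and the limit identity gives
`∫ ξ_t N_t = 0` for every bounded martingale `ξ`. Choosing `ξ_s = 𝔼[sign N_t | ℱ_s]` turns this
into `∫ |N_t| = 0`.
-/

open MeasureTheory Filter
open scoped NNReal

namespace MeasureTheory

variable {Ω : Type*} {m₀ : MeasurableSpace Ω} {μ : Measure Ω}

theorem integral_mul_condExp_of_stronglyMeasurable {m : MeasurableSpace Ω} (hm : m ≤ m₀)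
    [SigmaFinite (μ.trim hm)] {f g : Ω → ℝ} (hf : StronglyMeasurable[m] f)
    (hfg : Integrable (f * g) μ) (hg : Integrable g μ) :
    ∫ ω, f ω * μ[g | m] ω ∂μ = ∫ ω, f ω * g ω ∂μ :=
  calc ∫ ω, f ω * μ[g | m] ω ∂μ = ∫ ω, μ[f * g | m] ω ∂μ :=
        integral_congr_ae (condExp_mul_of_stronglyMeasurable_left hf hfg hg).symm
    _ = ∫ ω, f ω * g ω ∂μ := integral_condExp hm

variable {ι : Type*} [Preorder ι] {ℱ : Filtration ι m₀}

section SigmaFiniteFiltration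

variable [SigmaFiniteFiltration μ ℱ]

theorem Martingale.integral_mul_sub_eq_zero {N : ι → Ω → ℝ} (hN : Martingale N ℱ μ) {s u : ι}
    (hsu : s ≤ u) {f : Ω → ℝ} (hf : StronglyMeasurable[ℱ s] f) {K : ℝ}
    (hK : ∀ᵐ ω ∂μ, |f ω| ≤ K) :
    ∫ ω, f ω * (N u ω - N s ω) ∂μ = 0 := by
  have hint : ∀ v, Integrable (fun ω => f ω * N v ω) μ := fun v =>
    (hN.integrable v).bdd_mul (hf.mono (ℱ.le s)).aestronglyMeasurable hK
  simp_rw [mul_sub]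
  rw [integral_sub (hint u) (hint s), sub_eq_zero]
  calc ∫ ω, f ω * N u ω ∂μ = ∫ ω, f ω * μ[N u | ℱ s] ω ∂μ :=
        (integral_mul_condExp_of_stronglyMeasurable (ℱ.le s) hf (hint u) (hN.integrable u)).symm
    _ = ∫ ω, f ω * N s ω ∂μ := integral_congr_ae <| by
        filter_upwards [hN.condExp_ae_eq hsu] with ω h
        rw [h]

theorem Martingale.integral_sum_mul_increments_eq_zero {N ξ : ι → Ω → ℝ}
    (hN : Martingale N ℱ μ) (hξ : StronglyAdapted ℱ ξ) {K : ℝ} (hK : ∀ s, ∀ᵐ ω ∂μ, |ξ s ω| ≤ K)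
    {m : ℕ} {ts : Fin (m + 1) → ι} (hts : Monotone ts) :
    ∫ ω, ∑ j : Fin m, ξ (ts j.castSucc) ω * (N (ts j.succ) ω - N (ts j.castSucc) ω) ∂μ = 0 := by
  have hint : ∀ j : Fin m, Integrable
      (fun ω => ξ (ts j.castSucc) ω * (N (ts j.succ) ω - N (ts j.castSucc) ω)) μ := fun j =>
    ((hN.integrable _).sub (hN.integrable _)).bdd_mul
      ((hξ _).mono (ℱ.le _)).aestronglyMeasurable (hK _)
  rw [integral_finsetSum _ fun j _ => hint j]
  exact Finset.sum_eq_zero fun j _ =>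
    hN.integral_mul_sub_eq_zero (hts (Fin.castSucc_le_succ j)) (hξ _) (hK _)

theorem exists_bounded_martingale_ae_eq_condExp {g : Ω → ℝ} {K : ℝ≥0}
    (hg : ∀ᵐ ω ∂μ, |g ω| ≤ K) :
    ∃ ξ : ι → Ω → ℝ, Martingale ξ ℱ μ ∧ (∀ i ω, |ξ i ω| ≤ K) ∧ ∀ i, ξ i =ᵐ[μ] μ[g | ℱ i] := by
  set ξ : ι → Ω → ℝ := fun i ω => max (-K) (min K (μ[g | ℱ i] ω))
  have hξ_ae : ∀ i, ξ i =ᵐ[μ] μ[g | ℱ i] := fun i => by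
    filter_upwards [ae_bdd_abs_condExp_of_ae_bdd_abs (m := ℱ i) hg] with ω h
    simp only [ξ, min_eq_right (abs_le.1 h).2, max_eq_right (abs_le.1 h).1]
  refine ⟨ξ, ⟨fun i => ?_, fun i j hij => ?_⟩, fun i ω => ?_, hξ_ae⟩
  · exact (continuous_const.max (continuous_const.min continuous_id)).comp_stronglyMeasurable
      stronglyMeasurable_condExp
  · calc μ[ξ j | ℱ i] =ᵐ[μ] μ[μ[g | ℱ j] | ℱ i] := condExp_congr_ae (hξ_ae j)
      _ =ᵐ[μ] μ[g | ℱ i] := (martingale_condExp g ℱ μ).condExp_ae_eq hij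
      _ =ᵐ[μ] ξ i := (hξ_ae i).symm
  · exact abs_le.2 ⟨le_max_left _ _, max_le (by simp) (min_le_left _ _)⟩

end SigmaFiniteFiltration

theorem ae_eq_zero_of_forall_bounded_martingale_integral_mul_eq_zero [IsFiniteMeasure μ]
    {f : Ω → ℝ} {i : ι} (hf : StronglyMeasurable[ℱ i] f) (hfi : Integrable f μ)
    (h : ∀ ξ : ι → Ω → ℝ, Martingale ξ ℱ μ → (∃ K, ∀ s ω, |ξ s ω| ≤ K) →
      ∫ ω, ξ i ω * f ω ∂μ = 0) :
    f =ᵐ[μ] 0 := by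
  set g : Ω → ℝ := fun ω => SignType.sign (f ω)
  have hg_bdd : ∀ ω, |g ω| ≤ (1 : ℝ≥0) := fun ω => by
    rcases lt_trichotomy (f ω) 0 with h | h | h <;> simp [g, h]
  have hsign : Monotone fun x : ℝ => (SignType.sign x : ℝ) := fun a b hab => by
    simp only [sign_apply]
    split_ifs <;> norm_num <;> linarith
  have hg_meas : Measurable g := hsign.measurable.comp (hf.mono (ℱ.le i)).measurable
  have hg : Integrable g μ := .of_bound hg_meas.aestronglyMeasurable 1 (.of_forall hg_bdd)
  have hfg : f * g = fun ω => |f ω| := funext fun ω => self_mul_sign (f ω)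
  obtain ⟨ξ, hξ, hξ_bdd, hξ_ae⟩ :=
    exists_bounded_martingale_ae_eq_condExp (μ := μ) (ℱ := ℱ) (K := 1) (.of_forall hg_bdd)
  have habs : ∫ ω, |f ω| ∂μ = 0 :=
    calc ∫ ω, |f ω| ∂μ = ∫ ω, f ω * g ω ∂μ := by simp [g]
      _ = ∫ ω, f ω * μ[g | ℱ i] ω ∂μ :=
        (integral_mul_condExp_of_stronglyMeasurable (ℱ.le i) hf (hfg ▸ hfi.abs) hg).symm
      _ = ∫ ω, ξ i ω * f ω ∂μ := integral_congr_ae <| by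
        filter_upwards [hξ_ae i] with ω hω
        rw [hω, mul_comm]
      _ = 0 := h ξ hξ ⟨1, hξ_bdd⟩
  filter_upwards [(integral_eq_zero_iff_of_nonneg (fun ω => abs_nonneg (f ω)) hfi.abs).1 habs]
    with ω hω
  exact abs_eq_zero.1 hω

end MeasureTheory

theorem doob_meyer_decomposition_unique_general
    {Ω : Type*} {mΩ : MeasurableSpace Ω} {μ : Measure Ω} [IsProbabilityMeasure μ]
    (ℱ : Filtration ℝ≥0 mΩ) (M' M'' A' A'' : ℝ≥0 → Ω → ℝ)
    (hM' : Martingale M' ℱ μ) (hM'' : Martingale M'' ℱ μ)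
    (hA'0 : A' 0 =ᵐ[μ] 0) (hA''0 : A'' 0 =ᵐ[μ] 0)
    (hdecomp : ∀ t, (fun ω => M' t ω - A' t ω) =ᵐ[μ] fun ω => M'' t ω - A'' t ω)
    (C : ℝ≥0 → Ω → ℝ) (hC : C = fun t ω => A' t ω - A'' t ω)
    (hnatural : ∀ t : ℝ≥0, 0 < t →
      ∃ (m : ℕ → ℕ) (ts : (n : ℕ) → Fin (m n + 1) → ℝ≥0),
        (∀ n, Monotone (ts n)) ∧ (∀ n, ts n 0 = 0) ∧
        (∀ n, ts n (Fin.last (m n)) = t) ∧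
        (∀ ε : ℝ≥0, 0 < ε → ∃ N, ∀ n ≥ N, ∀ j : Fin (m n),
            ts n j.succ - ts n j.castSucc < ε) ∧
        (∀ ξ : ℝ≥0 → Ω → ℝ, Martingale ξ ℱ μ → (∃ K, ∀ s ω, |ξ s ω| ≤ K) →
          Tendsto
            (fun n => ∫ ω, (∑ j : Fin (m n),
                ξ (ts n j.castSucc) ω *
                  (C (ts n j.succ) ω - C (ts n j.castSucc) ω)) ∂μ)
            atTop (nhds (∫ ω, ξ t ω * C t ω ∂μ)))) :
    ∀ t, A' t =ᵐ[μ] A'' t ∧ M' t =ᵐ[μ] M'' t := by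
  intro t
  set N := M' - M''
  have hN : Martingale N ℱ μ := hM'.sub hM''
  have hCN : ∀ s, C s =ᵐ[μ] N s := fun s => by
    filter_upwards [hdecomp s] with ω h
    simp only [hC, N, Pi.sub_apply]
    linarith
  suffices hNt : N t =ᵐ[μ] 0 by
    constructor <;> filter_upwards [hNt, hdecomp t] with ω h₁ h₂ <;>
      simp only [N, Pi.sub_apply, Pi.zero_apply] at h₁ h₂ <;> linarith
  rcases eq_zero_or_pos t with rfl | ht
  · filter_upwards [hCN 0, hA'0, hA''0] with ω h h' h''
    simp_all
  obtain ⟨m, ts, hmono, -, -, -, hlim⟩ := hnatural t ht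
  refine ae_eq_zero_of_forall_bounded_martingale_integral_mul_eq_zero
    (hN.stronglyAdapted t) (hN.integrable t) fun ξ hξ ⟨K, hK⟩ => ?_
  have hsum : ∀ n, ∫ ω, (∑ j : Fin (m n), ξ (ts n j.castSucc) ω *
      (C (ts n j.succ) ω - C (ts n j.castSucc) ω)) ∂μ = 0 := fun n => by
    rw [← hN.integral_sum_mul_increments_eq_zero hξ.stronglyAdapted
      (fun s => .of_forall (hK s)) (hmono n)]
    refine integral_congr_ae ?_
    filter_upwards [ae_all_iff.2 fun j => hCN (ts n j)] with ω h
    simp only [h]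
  calc ∫ ω, ξ t ω * N t ω ∂μ = ∫ ω, ξ t ω * C t ω ∂μ := integral_congr_ae <| by
        filter_upwards [hCN t] with ω h
        rw [h]
    _ = 0 := tendsto_nhds_unique (hlim ξ hξ ⟨K, hK⟩) (by simpa only [hsum] using tendsto_const_nhds)

/-- Uniqueness in the Doob–Meyer decomposition with natural increasing parts:
if `M' - A' = M'' - A''` with `M', M''` martingales and `A', A''` adapted, integrable,
vanishing at `0`, and the difference `C = A' - A''` satisfies the "natural" limit
identity along partitions of vanishing mesh against every bounded martingale, then
`A'_t = A''_t` (and hence `M'_t = M''_t`) a.e. for every `t`. -/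
theorem doob_meyer_decomposition_unique
    {Ω : Type*} {mΩ : MeasurableSpace Ω} {μ : Measure Ω} [IsProbabilityMeasure μ]
    (ℱ : Filtration ℝ≥0 mΩ) (M' M'' A' A'' : ℝ≥0 → Ω → ℝ)
    (hM' : Martingale M' ℱ μ) (hM'' : Martingale M'' ℱ μ)
    (hA' : Adapted ℱ A') (hA'' : Adapted ℱ A'')
    (hA'int : ∀ t, Integrable (A' t) μ) (hA''int : ∀ t, Integrable (A'' t) μ)
    (hA'0 : A' 0 =ᵐ[μ] 0) (hA''0 : A'' 0 =ᵐ[μ] 0)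
    (hdecomp : ∀ t, (fun ω => M' t ω - A' t ω) =ᵐ[μ] fun ω => M'' t ω - A'' t ω)
    (C : ℝ≥0 → Ω → ℝ) (hC : C = fun t ω => A' t ω - A'' t ω)
    (hnatural : ∀ t : ℝ≥0, 0 < t →
      ∃ (m : ℕ → ℕ) (ts : (n : ℕ) → Fin (m n + 1) → ℝ≥0),
        (∀ n, Monotone (ts n)) ∧ (∀ n, ts n 0 = 0) ∧
        (∀ n, ts n (Fin.last (m n)) = t) ∧
        (∀ ε : ℝ≥0, 0 < ε → ∃ N, ∀ n ≥ N, ∀ j : Fin (m n),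
            ts n j.succ - ts n j.castSucc < ε) ∧
        (∀ ξ : ℝ≥0 → Ω → ℝ, Martingale ξ ℱ μ → (∃ K, ∀ s ω, |ξ s ω| ≤ K) →
          Tendsto
            (fun n => ∫ ω, (∑ j : Fin (m n),
                ξ (ts n j.castSucc) ω *
                  (C (ts n j.succ) ω - C (ts n j.castSucc) ω)) ∂μ)
            atTop (nhds (∫ ω, ξ t ω * C t ω ∂μ)))) :
    ∀ t, A' t =ᵐ[μ] A'' t ∧ M' t =ᵐ[μ] M'' t :=
  doob_meyer_decomposition_unique_general ℱ M' M'' A' A'' hM' hM'' hA'0 hA''0 hdecomp C hC hnatural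
end
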